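/- arXiv:1803.00698 — 3 statements merged into one kernel-verified Lean document; each statement's English description precedes it below -/
import Mathlib

section
/- Let N_s, A_u, n, k be natural numbers with T = N_s - A_u even, T > 0, n < T, and k ≥ 1. For natural numbers A_w, A_l with A_w + A_l = T, define the tail sum p(A_w, A_l) = Σ_{(i,j) : i ≥ 0, j ≥ 0, i - j ≥ k, i + j ≤ n} C(A_w, i) · C(A_l, j) · C(A_u, n - i - j) / C(N_s, n), where C(m, r) denotes the binomial coefficient (taken to be 0 when r > m). Then for every even natural number c with 0 < c ≤ T, p(T/2 + c/2, T/2 - c/2) ≥ p(T/2, T/2). In other words, over the null region {(A_w, A_l) : A_w + A_l = T, A_w - A_l ≤ c}, the tail probability is maximized on the boundary A_w - A_l = c. -/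
/-!
Moving one ballot from the loser to the winner can only raise the tail probability. Single out
that ballot: samples avoiding it keep their composition, while a sample containing it with
composition `(i, j + 1)` before the move has composition `(i + 1, j)` after it, and the region
`i - j ≥ k, i + j ≤ n` is closed under `(i, j + 1) ↦ (i + 1, j)`. Algebraically this is Pascal's
rule applied to `C(A_w + 1, i)` and to `C(A_l + 1, j)`. Iterating the move `c / 2` times carries
`(T/2, T/2)` to `(T/2 + c/2, T/2 - c/2)`.
-/

open Finset

/-- The conditional tri-hypergeometric tail probability: the chance that a simple
random sample of size `n` from `Ns` ballots (of which `Aw` are winner-only ballots,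
`Al` are loser-only ballots, and `Au` are the rest) contains `i` winner-only
and `j` loser-only ballots with `i - j ≥ k`. -/
def triHypTail (Ns Au n k Aw Al : ℕ) : ℚ :=
  ∑ ij ∈ (range (n + 1) ×ˢ range (n + 1)).filter
      (fun ij => ij.2 + k ≤ ij.1 ∧ ij.1 + ij.2 ≤ n),
    (Nat.choose Aw ij.1 * Nat.choose Al ij.2 * Nat.choose Au (n - ij.1 - ij.2) : ℚ)
      / Nat.choose Ns n

namespace TriHyp

def succFst (p : ℕ × ℕ) : ℕ × ℕ := (p.1 + 1, p.2)

def succSnd (p : ℕ × ℕ) : ℕ × ℕ := (p.1, p.2 + 1)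

lemma succFst_injective : Function.Injective succFst := by
  intro p q h
  simp only [succFst, Prod.mk.injEq, add_left_inj] at h
  exact Prod.ext h.1 h.2

lemma succSnd_injective : Function.Injective succSnd := by
  intro p q h
  simp only [succSnd, Prod.mk.injEq, add_left_inj] at h
  exact Prod.ext h.1 h.2

/-- Samples whose composition `(i, j)` lies in `S`, drawn from `a` winner and `b` loser ballots,
where `g (i + j)` counts the ways to fill the rest of the sample. -/
def compositionCount (S : Finset (ℕ × ℕ)) (g : ℕ → ℕ) (a b : ℕ) : ℕ :=
  ∑ p ∈ S, a.choose p.1 * b.choose p.2 * g (p.1 + p.2)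

variable (S : Finset (ℕ × ℕ)) (g : ℕ → ℕ)

lemma compositionCount_succ_left (a b : ℕ) :
    compositionCount S g (a + 1) b = compositionCount S g a b +
      compositionCount (S.preimage succFst succFst_injective.injOn) (fun m => g (m + 1)) a b := by
  unfold compositionCount
  let pascal : ℕ × ℕ → ℕ := fun p =>
    if p.1 = 0 then 0 else a.choose (p.1 - 1) * b.choose p.2 * g (p.1 + p.2)
  have hshift : ∑ p ∈ S.preimage succFst succFst_injective.injOn,
      a.choose p.1 * b.choose p.2 * g (p.1 + p.2 + 1) = ∑ p ∈ S, pascal p := by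
    rw [← sum_preimage succFst S succFst_injective.injOn pascal]
    · refine sum_congr rfl fun p _ => ?_
      simp [pascal, succFst, add_right_comm, add_assoc]
    · rintro ⟨i, j⟩ _ hp
      cases i with
      | zero => simp [pascal]
      | succ i => exact absurd ⟨(i, j), rfl⟩ hp
  beta_reduce
  rw [hshift, ← sum_add_distrib]
  refine sum_congr rfl fun ⟨i, j⟩ _ => ?_
  cases i with
  | zero => simp [pascal]
  | succ i => simp [pascal, Nat.choose_succ_succ]; ring

lemma compositionCount_succ_right (a b : ℕ) :
    compositionCount S g a (b + 1) = compositionCount S g a b +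
      compositionCount (S.preimage succSnd succSnd_injective.injOn) (fun m => g (m + 1)) a b := by
  unfold compositionCount
  let pascal : ℕ × ℕ → ℕ := fun p =>
    if p.2 = 0 then 0 else a.choose p.1 * b.choose (p.2 - 1) * g (p.1 + p.2)
  have hshift : ∑ p ∈ S.preimage succSnd succSnd_injective.injOn,
      a.choose p.1 * b.choose p.2 * g (p.1 + p.2 + 1) = ∑ p ∈ S, pascal p := by
    rw [← sum_preimage succSnd S succSnd_injective.injOn pascal]
    · refine sum_congr rfl fun p _ => ?_
      simp [pascal, succSnd, add_assoc]
    · rintro ⟨i, j⟩ _ hp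
      cases j with
      | zero => simp [pascal]
      | succ j => exact absurd ⟨(i, j), rfl⟩ hp
  beta_reduce
  rw [hshift, ← sum_add_distrib]
  refine sum_congr rfl fun ⟨i, j⟩ _ => ?_
  cases j with
  | zero => simp [pascal]
  | succ j => simp [pascal, Nat.choose_succ_succ]; ring

variable {S}

lemma compositionCount_mono {T : Finset (ℕ × ℕ)} (h : S ⊆ T) (a b : ℕ) :
    compositionCount S g a b ≤ compositionCount T g a b :=
  sum_le_sum_of_subset h

lemma compositionCount_succ_right_le_succ_left (hS : ∀ i j, (i, j + 1) ∈ S → (i + 1, j) ∈ S)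
    (a b : ℕ) :
    compositionCount S g a (b + 1) ≤ compositionCount S g (a + 1) b := by
  rw [compositionCount_succ_left, compositionCount_succ_right]
  gcongr
  refine compositionCount_mono _ (fun p hp => ?_) a b
  simp only [mem_preimage, succFst, succSnd] at hp ⊢
  exact hS _ _ hp

lemma compositionCount_add_right_le_add_left (hS : ∀ i j, (i, j + 1) ∈ S → (i + 1, j) ∈ S)
    (a b m : ℕ) :
    compositionCount S g a (b + m) ≤ compositionCount S g (a + m) b := by
  induction m generalizing a with
  | zero => rfl
  | succ m ih =>
    calc compositionCount S g a (b + m + 1)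
        ≤ compositionCount S g (a + 1) (b + m) :=
          compositionCount_succ_right_le_succ_left g hS a (b + m)
      _ ≤ compositionCount S g (a + 1 + m) b := ih (a + 1)
      _ = compositionCount S g (a + (m + 1)) b := by rw [add_right_comm, add_assoc]

def tailRegion (n k : ℕ) : Finset (ℕ × ℕ) :=
  (range (n + 1) ×ˢ range (n + 1)).filter (fun ij => ij.2 + k ≤ ij.1 ∧ ij.1 + ij.2 ≤ n)

lemma triHypTail_eq_compositionCount (Ns Au n k Aw Al : ℕ) :
    triHypTail Ns Au n k Aw Al =
      compositionCount (tailRegion n k) (fun m => Au.choose (n - m)) Aw Al / Ns.choose n := by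
  simp [triHypTail, tailRegion, compositionCount, sum_div, Nat.sub_sub]

lemma succ_fst_mem_tailRegion (n k : ℕ) {i j : ℕ} (h : (i, j + 1) ∈ tailRegion n k) :
    (i + 1, j) ∈ tailRegion n k := by
  simp only [tailRegion, mem_filter, mem_product, mem_range] at h ⊢
  omega

end TriHyp

open TriHyp

theorem triHypTail_max_on_boundary_general
    (Ns Au n k T : ℕ) :
    ∀ c : ℕ, Even c → 0 < c → c ≤ T →
      triHypTail Ns Au n k (T / 2) (T / 2) ≤
        triHypTail Ns Au n k (T / 2 + c / 2) (T / 2 - c / 2) := by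
  intro c _ _ hcT
  have hhalf : c / 2 ≤ T / 2 := Nat.div_le_div_right hcT
  have hcount := compositionCount_add_right_le_add_left (fun m => Au.choose (n - m))
    (fun _ _ => succ_fst_mem_tailRegion n k) (T / 2) (T / 2 - c / 2) (c / 2)
  rw [Nat.sub_add_cancel hhalf] at hcount
  rw [triHypTail_eq_compositionCount, triHypTail_eq_compositionCount]
  exact div_le_div_of_nonneg_right (by exact_mod_cast hcount) (Nat.cast_nonneg _)

/-- Over the null region `{(A_w, A_l) : A_w + A_l = T, A_w - A_l ≤ c}`, the
tri-hypergeometric tail probability is maximized on the boundary `A_w - A_l = c`. -/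
theorem triHypTail_max_on_boundary
    (Ns Au n k T : ℕ) (hT : T = Ns - Au) (hTeven : Even T) (hTpos : 0 < T)
    (hn : n < T) (hk : 1 ≤ k) :
    ∀ c : ℕ, Even c → 0 < c → c ≤ T →
      triHypTail Ns Au n k (T / 2) (T / 2) ≤
        triHypTail Ns Au n k (T / 2 + c / 2) (T / 2 - c / 2) :=
  triHypTail_max_on_boundary_general Ns Au n k T
end

section
/- Let a, b, u, n, k be natural numbers with a ≥ b ≥ 1 and k ≥ 1, and let S = {(i,j) : i ≥ 0, j ≥ 0, i - j ≥ k, i + j ≤ n}. Then Σ_{(i,j) ∈ S} C(a+1, i) C(b-1, j) C(u, n-i-j) / C(a+b+u, n) ≥ Σ_{(i,j) ∈ S} C(a, i) C(b, j) C(u, n-i-j) / C(a+b+u, n); equivalently, since the denominators agree, Σ_{(i,j) ∈ S} C(a+1, i) C(b-1, j) C(u, n-i-j) ≥ Σ_{(i,j) ∈ S} C(a, i) C(b, j) C(u, n-i-j). -/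
open Finset

/-- Unit-shift monotonicity: moving one ballot from the loser-only pile (size `b`)
to the winner-only pile (size `a`) cannot decrease the upper-tail sum of the
tri-hypergeometric probabilities over the region where the winner count exceeds
the loser count by at least `k ≥ 1`. -/
theorem triHyp_tail_unit_shift (a b u n k : ℕ) (hba : b ≤ a) (hb : 1 ≤ b) (hk : 1 ≤ k) :
    (∑ ij ∈ (range (n + 1) ×ˢ range (n + 1)).filter
        (fun ij => ij.2 + k ≤ ij.1 ∧ ij.1 + ij.2 ≤ n),
      (Nat.choose a ij.1 * Nat.choose b ij.2 * Nat.choose u (n - ij.1 - ij.2) : ℚ)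
        / Nat.choose (a + b + u) n
      ≤ ∑ ij ∈ (range (n + 1) ×ˢ range (n + 1)).filter
          (fun ij => ij.2 + k ≤ ij.1 ∧ ij.1 + ij.2 ≤ n),
        (Nat.choose (a + 1) ij.1 * Nat.choose (b - 1) ij.2
            * Nat.choose u (n - ij.1 - ij.2) : ℚ) / Nat.choose (a + b + u) n)
    ∧
    (∑ ij ∈ (range (n + 1) ×ˢ range (n + 1)).filter
        (fun ij => ij.2 + k ≤ ij.1 ∧ ij.1 + ij.2 ≤ n),
      Nat.choose a ij.1 * Nat.choose b ij.2 * Nat.choose u (n - ij.1 - ij.2)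
      ≤ ∑ ij ∈ (range (n + 1) ×ˢ range (n + 1)).filter
          (fun ij => ij.2 + k ≤ ij.1 ∧ ij.1 + ij.2 ≤ n),
        Nat.choose (a + 1) ij.1 * Nat.choose (b - 1) ij.2
          * Nat.choose u (n - ij.1 - ij.2)) := by
  have hnat :
      (∑ ij ∈ ((range (n + 1) ×ˢ range (n + 1)).filter
          (fun ij => ij.2 + k ≤ ij.1 ∧ ij.1 + ij.2 ≤ n)),
        Nat.choose a ij.1 * Nat.choose b ij.2 * Nat.choose u (n - ij.1 - ij.2))
      ≤ ∑ ij ∈ ((range (n + 1) ×ˢ range (n + 1)).filter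
          (fun ij => ij.2 + k ≤ ij.1 ∧ ij.1 + ij.2 ≤ n)),
        Nat.choose (a+1) ij.1 * Nat.choose (b-1) ij.2 * Nat.choose u (n - ij.1 - ij.2) := by
    set S := ((range (n + 1) ×ˢ range (n + 1)).filter
          (fun ij : ℕ × ℕ => ij.2 + k ≤ ij.1 ∧ ij.1 + ij.2 ≤ n)) with hS
    have hmem : ∀ p ∈ S, p.2 + k ≤ p.1 ∧ p.1 + p.2 ≤ n ∧ p.1 ≤ n ∧ p.2 ≤ n := by
      intro p hp
      simp only [hS, mem_filter, mem_product, mem_range] at hp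
      omega
    have hL : ∑ ij ∈ S, Nat.choose a ij.1 * Nat.choose b ij.2 * Nat.choose u (n - ij.1 - ij.2)
        = (∑ ij ∈ S, Nat.choose a ij.1 * Nat.choose (b-1) ij.2 * Nat.choose u (n - ij.1 - ij.2))
          + ∑ ij ∈ S, (if ij.2 = 0 then 0 else
              Nat.choose a ij.1 * Nat.choose (b-1) (ij.2 - 1) * Nat.choose u (n - ij.1 - ij.2)) := by
      rw [← Finset.sum_add_distrib]
      refine Finset.sum_congr rfl fun p _ => ?_
      rcases p with ⟨i, j⟩
      cases j with
      | zero => simp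
      | succ j =>
        have hb' : b = (b - 1) + 1 := by omega
        simp only [Nat.succ_ne_zero, if_false, Nat.succ_sub_one]
        conv_lhs => rw [hb', Nat.choose_succ_succ]
        ring
    have hR : ∑ ij ∈ S,
          Nat.choose (a+1) ij.1 * Nat.choose (b-1) ij.2 * Nat.choose u (n - ij.1 - ij.2)
        = (∑ ij ∈ S, Nat.choose a ij.1 * Nat.choose (b-1) ij.2 * Nat.choose u (n - ij.1 - ij.2))
          + ∑ ij ∈ S,
              Nat.choose a (ij.1 - 1) * Nat.choose (b-1) ij.2 * Nat.choose u (n - ij.1 - ij.2) := by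
      rw [← Finset.sum_add_distrib]
      refine Finset.sum_congr rfl fun p hp => ?_
      obtain ⟨h1, h2, h3, h4⟩ := hmem p hp
      rcases p with ⟨i, j⟩
      have hi : 1 ≤ i := by omega
      obtain ⟨i', rfl⟩ : ∃ i', i = i' + 1 := ⟨i - 1, by omega⟩
      simp only [Nat.add_sub_cancel]
      rw [Nat.choose_succ_succ]
      ring
    rw [hL, hR]
    refine Nat.add_le_add_left ?_ _
    -- rewrite the `if` sum as a sum over a filtered set
    have h2 : ∑ ij ∈ S, (if ij.2 = 0 then 0 else
          Nat.choose a ij.1 * Nat.choose (b-1) (ij.2 - 1) * Nat.choose u (n - ij.1 - ij.2))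
        = ∑ ij ∈ S.filter (fun p => p.2 ≠ 0),
            Nat.choose a ij.1 * Nat.choose (b-1) (ij.2 - 1) * Nat.choose u (n - ij.1 - ij.2) := by
      rw [eq_comm, Finset.sum_filter]
      refine Finset.sum_congr rfl fun p _ => ?_
      by_cases h : p.2 = 0 <;> simp [h]
    rw [h2]
    set S1 := ((range (n + 1) ×ˢ range (n + 1)).filter
          (fun p : ℕ × ℕ => p.2 + k ≤ p.1 + 1 ∧ p.1 + p.2 + 1 ≤ n)) with hS1
    set S2 := ((range (n + 1) ×ˢ range (n + 1)).filter
          (fun p : ℕ × ℕ => p.2 + k + 1 ≤ p.1 ∧ p.1 + p.2 + 1 ≤ n)) with hS2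
    have e2 : ∑ ij ∈ S.filter (fun p => p.2 ≠ 0),
          Nat.choose a ij.1 * Nat.choose (b-1) (ij.2 - 1) * Nat.choose u (n - ij.1 - ij.2)
        = ∑ ij ∈ S2,
            Nat.choose a ij.1 * Nat.choose (b-1) ij.2 * Nat.choose u (n - ij.1 - ij.2 - 1) := by
      refine Finset.sum_nbij' (fun p => (p.1, p.2 - 1)) (fun p => (p.1, p.2 + 1)) ?_ ?_ ?_ ?_ ?_
      · intro p hp
        simp only [hS, hS2, mem_filter, mem_product, mem_range] at hp ⊢
        omega
      · intro p hp
        simp only [hS, hS2, mem_filter, mem_product, mem_range] at hp ⊢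
        omega
      · intro p hp
        simp only [hS, mem_filter, mem_product, mem_range] at hp
        ext <;> simp <;> omega
      · intro p hp
        ext <;> simp
      · intro p hp
        simp only [hS, mem_filter, mem_product, mem_range] at hp
        have : n - p.1 - p.2 = n - p.1 - (p.2 - 1) - 1 := by omega
        rw [this]
    have e3 : ∑ ij ∈ S,
          Nat.choose a (ij.1 - 1) * Nat.choose (b-1) ij.2 * Nat.choose u (n - ij.1 - ij.2)
        = ∑ ij ∈ S1,
            Nat.choose a ij.1 * Nat.choose (b-1) ij.2 * Nat.choose u (n - ij.1 - ij.2 - 1) := by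
      refine Finset.sum_nbij' (fun p => (p.1 - 1, p.2)) (fun p => (p.1 + 1, p.2)) ?_ ?_ ?_ ?_ ?_
      · intro p hp
        simp only [hS, hS1, mem_filter, mem_product, mem_range] at hp ⊢
        omega
      · intro p hp
        simp only [hS, hS1, mem_filter, mem_product, mem_range] at hp ⊢
        omega
      · intro p hp
        simp only [hS, mem_filter, mem_product, mem_range] at hp
        ext <;> simp <;> omega
      · intro p hp
        ext <;> simp
      · intro p hp
        simp only [hS, mem_filter, mem_product, mem_range] at hp
        have : n - p.1 - p.2 = n - (p.1 - 1) - p.2 - 1 := by omega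
        rw [this]
    rw [e2, e3]
    refine Finset.sum_le_sum_of_subset ?_
    intro p hp
    simp only [hS1, hS2, mem_filter, mem_product, mem_range] at hp ⊢
    omega
  refine ⟨?_, hnat⟩
  rw [← Finset.sum_div, ← Finset.sum_div]
  have hcast : (∑ ij ∈ ((range (n + 1) ×ˢ range (n + 1)).filter
        (fun ij => ij.2 + k ≤ ij.1 ∧ ij.1 + ij.2 ≤ n)),
      ((Nat.choose a ij.1 : ℚ) * Nat.choose b ij.2 * Nat.choose u (n - ij.1 - ij.2)))
      ≤ ∑ ij ∈ ((range (n + 1) ×ˢ range (n + 1)).filter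
        (fun ij => ij.2 + k ≤ ij.1 ∧ ij.1 + ij.2 ≤ n)),
      ((Nat.choose (a+1) ij.1 : ℚ) * Nat.choose (b-1) ij.2
        * Nat.choose u (n - ij.1 - ij.2)) := by
    exact_mod_cast hnat
  rcases eq_or_lt_of_le (show (0:ℚ) ≤ (Nat.choose (a+b+u) n : ℚ) from Nat.cast_nonneg _)
    with h | h
  · simp [← h]
  · exact (div_le_div_iff_of_pos_right h).mpr hcast
end

section
/- Fix a batch p. Let 𝒲 and ℒ be nonempty finite sets, and for each candidate i let v_{pi} and a_{pi} be real numbers, with n_p ≥ 0 a real number such that 0 ≤ a_{pi} ≤ n_p for every candidate i, and V_{wℓ} > 0 for all (w,ℓ) ∈ 𝒲 × ℒ. Then e_p := max_{(w,ℓ)} (v_{pw} - a_{pw} - v_{pℓ} + a_{pℓ}) / V_{wℓ} ≤ max_{(w,ℓ)} (v_{pw} - v_{pℓ} + n_p) / V_{wℓ} =: u_p. That is, the a priori bound u_p, computable from the reported results alone, bounds the maximum relative overstatement e_p of batch p. -/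
open Finset

/-- The a priori bound `u_p`, computable from the reported results alone,
bounds the maximum relative overstatement `e_p` of batch `p`. -/
theorem batch_error_apriori_bound
    {C : Type*} (W L : Finset C) (hW : W.Nonempty) (hL : L.Nonempty)
    (v a : C → ℝ) (np : ℝ) (hnp : 0 ≤ np)
    (ha : ∀ i : C, 0 ≤ a i ∧ a i ≤ np)
    (V : C → C → ℝ) (hV : ∀ w ∈ W, ∀ l ∈ L, 0 < V w l) :
    (W ×ˢ L).sup' (hW.product hL)
        (fun wl => (v wl.1 - a wl.1 - v wl.2 + a wl.2) / V wl.1 wl.2)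
      ≤ (W ×ˢ L).sup' (hW.product hL)
        (fun wl => (v wl.1 - v wl.2 + np) / V wl.1 wl.2) := by
  apply Finset.sup'_le
  intro wl hwl
  rw [Finset.mem_product] at hwl
  refine le_trans ?_ (Finset.le_sup' _ (Finset.mem_product.mpr hwl))
  have hVpos := hV wl.1 hwl.1 wl.2 hwl.2
  have h1 := (ha wl.1).1
  have h2 := (ha wl.2).2
  apply div_le_div_of_nonneg_right ?_ hVpos.le <;> linarith
end
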